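/- arXiv:2310.00855 — 2 statements merged into one kernel-verified Lean document; each statement's English description precedes it below -/
import Mathlib

section
/- For every partition λ with at most n parts (λ_1 ≥ λ_2 ≥ … ≥ λ_n ≥ 0) there exists a unique symmetric polynomial s_λ ∈ P such that s_λ · a_ρ = a_{λ+ρ}, where ρ = (n−1, n−2, …, 1, 0) and λ+ρ = (λ_1+n−1, λ_2+n−2, …, λ_n). Moreover the family (s_λ), indexed by all such partitions λ, is an R-basis of the R-module of symmetric polynomials in P. -/
/-!
Call `f ∈ P` alternating if `σ • f = sgn σ • f` for all `σ`. Each `a_ν` is the determinant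
`det ((x_i | t)^{ν_j})`, hence alternating, and column operations turn `a_ρ` into `±` the
Vandermonde determinant `∏_{i<j} (x_j - x_i)`. The factors `x_j - x_i` are pairwise non-associated
primes dividing every alternating polynomial, so `a_ρ` divides every alternating `f` and the
quotient is symmetric: multiplication by `a_ρ` is an isomorphism from the symmetric onto the
alternating polynomials.

An alternating polynomial is determined by its coefficients at strictly decreasing exponents, and
for strictly decreasing `κ, ν` with `|ν| ≤ |κ|` the coefficient of `x^κ` in `a_ν` is `δ_{κν}`
(the leading term of `(x_i | t)^k` is `x_i^k`). This triangularity makes the `a_ν`, `ν` strictly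
decreasing, a basis of the alternating polynomials, and `ν = λ + ρ` runs exactly over these `ν`.
-/

/- R = ℤ[t₁, t₂, …] with tₖ encoded as `MvPolynomial.X (k-1)`, i.e. 0-indexed;
   P = R[x₁, …, xₙ] = MvPolynomial (Fin n) R. -/

open MvPolynomial

noncomputable section

abbrev R : Type := MvPolynomial ℕ ℤ

abbrev P (n : ℕ) : Type := MvPolynomial (Fin n) R

/-- The double monomial `(x_i | t)^k = (x_i + t₁) ⋯ (x_i + tₖ)`. -/
def dm (n : ℕ) (i : Fin n) (k : ℕ) : P n :=
  ∏ j ∈ Finset.range k, (X i + C (MvPolynomial.X j : R))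

/-- `a_ν = Σ_{σ ∈ S_n} sgn(σ) Π_i (x_{σ(i)} | t)^{ν_i}`. -/
def aPoly (n : ℕ) (ν : Fin n → ℕ) : P n :=
  ∑ σ : Equiv.Perm (Fin n), (Equiv.Perm.sign σ : ℤ) • ∏ i : Fin n, dm n (σ i) (ν i)

/-- `ρ = (n-1, n-2, …, 1, 0)`. -/
def rho (n : ℕ) : Fin n → ℕ := fun i => n - 1 - (i : ℕ)

/-- `Λₙ`, the `R`-submodule of symmetric polynomials of `P`. -/
def SymmSub (n : ℕ) : Submodule R (P n) :=
  Subalgebra.toSubmodule (symmetricSubalgebra (Fin n) R)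

theorem Function.Injective.exists_strictAnti_comp_perm {n : ℕ} {α : Type*} [LinearOrder α]
    {d : Fin n → α} (hd : Function.Injective d) :
    ∃ τ : Equiv.Perm (Fin n), StrictAnti (d ∘ τ) :=
  ⟨Tuple.sort (OrderDual.toDual ∘ d),
    Antitone.strictAnti_of_injective (f := d ∘ Tuple.sort (OrderDual.toDual ∘ d))
      (monotone_toDual_comp_iff.mp (Tuple.monotone_sort _)) (hd.comp (Equiv.injective _))⟩

theorem StrictAnti.perm_eq_one_of_comp {n : ℕ} {α : Type*} [Preorder α] {ν : Fin n → α}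
    (hν : StrictAnti ν) {τ : Equiv.Perm (Fin n)} (h : StrictAnti (ν ∘ τ)) : τ = 1 :=
  Equiv.ext fun _ => StrictMono.apply_eq (f := τ) fun _ _ hij => hν.lt_iff_gt.mp (h hij)

theorem Polynomial.prod_coeff_eq_ite {A ι : Type*} [CommRing A] [Fintype ι] [DecidableEq ι]
    {p : ι → Polynomial A} (hp : ∀ i, (p i).Monic) {κ : ι → ℕ}
    (hκ : ∑ i, (p i).natDegree ≤ ∑ i, κ i) :
    ∏ i, (p i).coeff (κ i) = if κ = fun i => (p i).natDegree then 1 else 0 := by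
  by_cases hle : ∀ i, κ i ≤ (p i).natDegree
  · have hκ_eq : κ = fun i => (p i).natDegree := _root_.funext fun i =>
      (Finset.sum_eq_sum_iff_of_le fun i _ => hle i).mp (le_antisymm (Finset.sum_le_sum
        fun i _ => hle i) hκ) i (Finset.mem_univ i)
    simp [hκ_eq, hp]
  · obtain ⟨i, hi⟩ : ∃ i, (p i).natDegree < κ i := by simpa using hle
    rw [Finset.prod_eq_zero (Finset.mem_univ i) (Polynomial.coeff_eq_zero_of_natDegree_lt hi),
      if_neg fun h => hi.ne' (congrFun h i)]

namespace MvPolynomial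

open Equiv

def alternatingSubmodule (n : ℕ) (A : Type*) [CommRing A] :
    Submodule A (MvPolynomial (Fin n) A) where
  carrier := {f | ∀ τ : Perm (Fin n), rename τ f = Perm.sign τ • f}
  add_mem' hf hg τ := by rw [map_add, hf τ, hg τ, smul_add]
  zero_mem' τ := by rw [map_zero, smul_zero]
  smul_mem' c f hf τ := by rw [map_smul, hf τ, smul_comm]

variable {ι A : Type*} [CommRing A]

theorem X_sub_X_dvd_sub_rename_update [DecidableEq ι] (i j : ι) (f : MvPolynomial ι A) :
    X i - X j ∣ f - rename (Function.update id i j) f := by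
  rw [← Ideal.mem_span_singleton, ← Ideal.Quotient.eq]
  set q := Ideal.Quotient.mkₐ A (Ideal.span {(X i - X j : MvPolynomial ι A)})
  have hq : q.comp (rename (Function.update id i j)) = q := by
    refine algHom_ext fun k => ?_
    by_cases hk : k = i
    · subst hk
      simpa [q] using (Ideal.Quotient.eq.mpr (Ideal.mem_span_singleton_self _)).symm
    · simp [q, Function.update_of_ne hk]
  exact (AlgHom.congr_fun hq f).symm

theorem prime_X_sub_X [IsDomain A] {i j : ι} (h : i ≠ j) :
    Prime (X i - X j : MvPolynomial ι A) := by
  classical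
  -- the automorphism `x_i ↦ x_i - x_j` carries the prime `x_i` to `x_i - x_j`
  let e : MvPolynomial ι A ≃ₐ[A] MvPolynomial ι A := AlgEquiv.ofAlgHom
    (aeval (Function.update X i (X i - X j))) (aeval (Function.update X i (X i + X j)))
    (algHom_ext fun k => by by_cases hk : k = i <;> simp [hk, h.symm])
    (algHom_ext fun k => by by_cases hk : k = i <;> simp [hk, h.symm])
  have he : e (X i) = X i - X j := by simp [e]
  rw [← he, MulEquiv.prime_iff]
  exact X_prime

theorem coeff_prod_aeval_X [Fintype ι] [DecidableEq ι] (p : ι → Polynomial A)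
    (d : ι →₀ ℕ) :
    coeff d (∏ i, Polynomial.aeval (X i) (p i)) = ∏ i, (p i).coeff (d i) := by
  have expand (i : ι) : Polynomial.aeval (X i : MvPolynomial ι A) (p i) =
      ∑ l ∈ (p i).support, monomial (Finsupp.single i l) ((p i).coeff l) := by
    conv_lhs => rw [(p i).as_sum_support_C_mul_X_pow]
    simp [X_pow_eq_monomial, C_mul_monomial]
  have sum_single (μ : ι → ℕ) : ∑ i, Finsupp.single i (μ i) = Finsupp.equivFunOnFinite.symm μ :=
    (Finsupp.equivFunOnFinite_symm_eq_sum μ).symm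
  simp_rw [expand, Finset.prod_univ_sum, ← monomial_sum_prod, coeff_sum, coeff_monomial,
    sum_single]
  rw [Finset.sum_eq_single ⇑d]
  · simp
  · intro μ _ hμ
    rw [if_neg]
    rintro rfl
    exact hμ rfl
  · intro hd
    obtain ⟨i, hi⟩ : ∃ i, d i ∉ (p i).support := by simpa [Fintype.mem_piFinset] using hd
    rw [if_pos (by simp),
      Finset.prod_eq_zero (Finset.mem_univ i) (Polynomial.notMem_support_iff.mp hi)]

variable {n : ℕ}

theorem IsSymmetric.mul_mem_alternatingSubmodule {s f : MvPolynomial (Fin n) A}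
    (hs : s.IsSymmetric) (hf : f ∈ alternatingSubmodule n A) :
    s * f ∈ alternatingSubmodule n A := fun τ => by
  rw [map_mul, hs τ, hf τ, mul_smul_comm]

theorem isSymmetric_of_mul_mem_alternatingSubmodule [IsDomain A] {s g : MvPolynomial (Fin n) A}
    (hg : g ∈ alternatingSubmodule n A) (hg0 : g ≠ 0) (hsg : s * g ∈ alternatingSubmodule n A) :
    s.IsSymmetric := fun τ => by
  have h : Perm.sign τ • (rename τ s * g) = Perm.sign τ • (s * g) := by
    rw [← mul_smul_comm, ← hg τ, ← map_mul, hsg τ]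
  exact mul_right_cancel₀ hg0 (smul_left_cancel_iff _ |>.mp h)

theorem smul_coeff_mapDomain_of_mem_alternatingSubmodule {f : MvPolynomial (Fin n) A}
    (hf : f ∈ alternatingSubmodule n A) (τ : Perm (Fin n)) (d : Fin n →₀ ℕ) :
    Perm.sign τ • coeff (d.mapDomain τ) f = coeff d f := by
  rw [← coeff_rename_mapDomain τ τ.injective f d, hf τ, coeff_smul]

theorem injective_of_mem_support_of_mem_alternatingSubmodule [IsAddTorsionFree A]
    {f : MvPolynomial (Fin n) A} (hf : f ∈ alternatingSubmodule n A) {d : Fin n →₀ ℕ}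
    (hd : d ∈ f.support) : Function.Injective d := by
  intro i j hij
  by_contra hne
  have hswap : d.mapDomain (swap i j) = d := by
    ext k
    rw [Finsupp.mapDomain_equiv_apply, symm_swap, swap_apply_def]
    split_ifs <;> subst_vars <;> simp [hij]
  have h := smul_coeff_mapDomain_of_mem_alternatingSubmodule hf (swap i j) d
  rw [hswap, Perm.sign_swap hne, Units.neg_smul, one_smul, neg_eq_self] at h
  exact mem_support_iff.mp hd h

theorem eq_zero_of_mem_alternatingSubmodule [IsAddTorsionFree A] {f : MvPolynomial (Fin n) A}
    (hf : f ∈ alternatingSubmodule n A) (h : ∀ d : Fin n →₀ ℕ, StrictAnti ⇑d → coeff d f = 0) :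
    f = 0 := by
  ext d
  by_contra hd
  rw [coeff_zero] at hd
  obtain ⟨τ, hτ⟩ := (injective_of_mem_support_of_mem_alternatingSubmodule hf
    (mem_support_iff.mpr hd)).exists_strictAnti_comp_perm
  have h' := smul_coeff_mapDomain_of_mem_alternatingSubmodule hf τ.symm d
  have hsorted : ⇑(d.mapDomain τ.symm) = d ∘ τ := by
    ext k
    rw [Finsupp.mapDomain_equiv_apply, symm_symm, Function.comp_apply]
  rw [h _ (hsorted ▸ hτ), smul_zero] at h'
  exact hd h'.symm

theorem X_sub_X_dvd_of_mem_alternatingSubmodule [IsDomain A] [CharZero A]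
    {f : MvPolynomial (Fin n) A} (hf : f ∈ alternatingSubmodule n A) {i j : Fin n} (h : i ≠ j) :
    X i - X j ∣ f := by
  -- substituting `x_i := x_j` is invariant under `swap i j`, so it kills `f = -(swap i j • f)`
  have hcomp : Function.update id i j ∘ swap i j = Function.update id i j := by
    ext k
    rw [Function.comp_apply, swap_apply_def]
    split_ifs <;> subst_vars <;> simp [h.symm]
  have hzero : rename (Function.update id i j) f = 0 := by
    have h' := congrArg (rename (Function.update id i j)) (hf (swap i j))
    rw [rename_rename, hcomp, Perm.sign_swap h, Units.neg_smul, one_smul, map_neg] at h'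
    exact self_eq_neg.mp h'
  simpa [hzero] using X_sub_X_dvd_sub_rename_update i j f

theorem eq_of_X_sub_X_dvd [Nontrivial A] {i j k l : Fin n} (hij : i < j) (hkl : k < l)
    (h : (X j - X i : MvPolynomial (Fin n) A) ∣ X l - X k) : i = k ∧ j = l := by
  obtain ⟨c, hc⟩ := h
  have h' := congrArg (rename (Function.update id j i)) hc
  rw [map_mul, map_sub, map_sub, rename_X, rename_X, rename_X, rename_X] at h'
  simp only [Function.update_self, Function.update_of_ne hij.ne, id, sub_self, zero_mul,
    sub_eq_zero] at h'
  have h'' := X_injective h'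
  simp only [Function.update_apply, id] at h''
  split_ifs at h'' <;> omega

theorem det_vandermonde_X_dvd_of_mem_alternatingSubmodule [IsDomain A] [CharZero A]
    {f : MvPolynomial (Fin n) A} (hf : f ∈ alternatingSubmodule n A) :
    (Matrix.vandermonde (X : Fin n → MvPolynomial (Fin n) A)).det ∣ f := by
  classical
  rw [Matrix.det_vandermonde, Finset.prod_sigma', Finset.prod_eq_multiset_prod]
  have mem_pairs {x : Σ _ : Fin n, Fin n} (hx : x ∈ Finset.univ.sigma fun i => Finset.Ioi i) :
      x.1 < x.2 := Finset.mem_Ioi.mp (Finset.mem_sigma.mp hx).2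
  refine Multiset.prod_primes_dvd f ?_ ?_ fun a => ?_
  · simp only [Multiset.mem_map, forall_exists_index, and_imp]
    rintro _ x hx rfl
    exact prime_X_sub_X (mem_pairs hx).ne'
  · simp only [Multiset.mem_map, forall_exists_index, and_imp]
    rintro _ x hx rfl
    exact X_sub_X_dvd_of_mem_alternatingSubmodule hf (mem_pairs hx).ne'
  · rw [Multiset.countP_map, ← Finset.filter_val, Finset.card_val]
    refine Finset.card_le_one.mpr fun x hx y hy => ?_
    rw [Finset.mem_filter] at hx hy
    obtain ⟨hik, hjl⟩ :=
      eq_of_X_sub_X_dvd (mem_pairs hx.1) (mem_pairs hy.1) (hx.2.symm.trans hy.2).dvd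
    exact Sigma.ext hik (heq_of_eq hjl)

end MvPolynomial

section Alternants

open Equiv

variable {n : ℕ}

def doubleMonomial (k : ℕ) : Polynomial R :=
  ∏ j ∈ Finset.range k, (Polynomial.X + Polynomial.C (X j))

theorem doubleMonomial_monic (k : ℕ) : (doubleMonomial k).Monic :=
  Polynomial.monic_prod_of_monic _ _ fun _ _ => Polynomial.monic_X_add_C _

theorem natDegree_doubleMonomial (k : ℕ) : (doubleMonomial k).natDegree = k := by
  rw [doubleMonomial, Polynomial.natDegree_prod_of_monic _ _ fun _ _ => Polynomial.monic_X_add_C _]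
  simp

theorem aeval_X_doubleMonomial (i : Fin n) (k : ℕ) :
    Polynomial.aeval (X i) (doubleMonomial k) = dm n i k := by
  simp [doubleMonomial, dm]

theorem aPoly_eq_det (ν : Fin n → ℕ) : aPoly n ν = (Matrix.of fun i j => dm n i (ν j)).det := by
  simp [aPoly, Matrix.det_apply, Units.smul_def]

theorem rename_dm (τ : Perm (Fin n)) (i : Fin n) (k : ℕ) :
    rename τ (dm n i k) = dm n (τ i) k := by
  simp [dm]

theorem aPoly_mem_alternatingSubmodule (ν : Fin n → ℕ) :
    aPoly n ν ∈ alternatingSubmodule n R := fun τ => by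
  have hmap : (rename τ).mapMatrix (Matrix.of fun i j => dm n i (ν j)) =
      (Matrix.of fun i j => dm n i (ν j)).submatrix τ id := by
    ext i j
    simp [rename_dm]
  rw [aPoly_eq_det, AlgHom.map_det, hmap, Matrix.det_permute, Units.smul_def, zsmul_eq_mul]

theorem aPoly_comp_perm (ν : Fin n → ℕ) (τ : Perm (Fin n)) :
    aPoly n (ν ∘ τ) = Perm.sign τ • aPoly n ν := by
  rw [aPoly_eq_det, aPoly_eq_det, Units.smul_def, zsmul_eq_mul, ← Matrix.det_permute']
  rfl

theorem aPoly_val_eq_det_vandermonde :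
    aPoly n (fun j => j) = (Matrix.vandermonde (X : Fin n → P n)).det := by
  rw [Matrix.det_eval_matrixOfPolynomials_eq_det_vandermonde X
      (fun j => (doubleMonomial j).map (algebraMap R (P n)))
      (fun j => by rw [(doubleMonomial_monic j).natDegree_map, natDegree_doubleMonomial])
      (fun j => (doubleMonomial_monic j).map _), aPoly_eq_det]
  congr 1
  ext i j
  rw [Matrix.of_apply, Matrix.of_apply, Polynomial.eval_map_algebraMap, aeval_X_doubleMonomial]

theorem aPoly_rho :
    aPoly n (rho n) = Perm.sign (Fin.revPerm : Perm (Fin n)) •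
      (Matrix.vandermonde (X : Fin n → P n)).det := by
  have hrho : rho n = (fun j : Fin n => (j : ℕ)) ∘ Fin.revPerm := by
    ext i
    simp only [rho, Function.comp_apply, Fin.revPerm_apply, Fin.val_rev]
    omega
  rw [hrho, aPoly_comp_perm, aPoly_val_eq_det_vandermonde]

theorem aPoly_rho_ne_zero : aPoly n (rho n) ≠ 0 := by
  rw [aPoly_rho, smul_ne_zero_iff_ne, Matrix.det_vandermonde_ne_zero_iff]
  exact X_injective

theorem exists_isSymmetric_mul_aPoly_rho {f : P n} (hf : f ∈ alternatingSubmodule n R) :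
    ∃ s : P n, s.IsSymmetric ∧ s * aPoly n (rho n) = f := by
  obtain ⟨s, rfl⟩ : aPoly n (rho n) ∣ f := by
    rw [aPoly_rho, Units.smul_def, zsmul_eq_mul]
    exact ((Perm.sign _).isUnit.map (Int.castRingHom (P n))).mul_left_dvd.mpr
      (det_vandermonde_X_dvd_of_mem_alternatingSubmodule hf)
  rw [mul_comm] at hf ⊢
  exact ⟨s, isSymmetric_of_mul_mem_alternatingSubmodule
    (aPoly_mem_alternatingSubmodule _) aPoly_rho_ne_zero hf, rfl⟩

theorem coeff_prod_dm (μ : Fin n → ℕ) (d : Fin n →₀ ℕ) :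
    coeff d (∏ i, dm n i (μ i)) = ∏ i, (doubleMonomial (μ i)).coeff (d i) := by
  simp_rw [← aeval_X_doubleMonomial]
  exact coeff_prod_aeval_X _ d

theorem coeff_aPoly {ν : Fin n → ℕ} (hν : StrictAnti ν) {d : Fin n →₀ ℕ} (hd : StrictAnti ⇑d)
    (hdeg : ∑ i, ν i ≤ d.degree) : coeff d (aPoly n ν) = if ⇑d = ν then 1 else 0 := by
  have hterm (τ : Perm (Fin n)) :
      coeff d (∏ i, dm n (τ i) (ν i)) = if ⇑d = ν ∘ τ.symm then 1 else 0 := by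
    have hreindex : ∏ i, dm n (τ i) (ν i) = ∏ i, dm n i ((ν ∘ τ.symm) i) := by
      rw [← Equiv.prod_comp τ fun i => dm n i ((ν ∘ τ.symm) i)]
      simp
    rw [hreindex, coeff_prod_dm, Polynomial.prod_coeff_eq_ite fun _ => doubleMonomial_monic _]
    · simp only [natDegree_doubleMonomial]
    · simpa [natDegree_doubleMonomial, Equiv.sum_comp, Finsupp.degree_eq_sum] using hdeg
  rw [aPoly, coeff_sum, Finset.sum_eq_single 1]
  · rw [coeff_smul, hterm, Perm.sign_one, Units.val_one, one_smul]
    rfl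
  · intro τ _ hτ
    rw [coeff_smul, hterm, if_neg, smul_zero]
    rintro h
    exact hτ (inv_eq_one.mp (hν.perm_eq_one_of_comp (h ▸ hd)))
  · simp

theorem linearIndependent_aPoly :
    LinearIndependent R (fun ν : {ν : Fin n → ℕ // StrictAnti ν} => aPoly n ν) := by
  classical
  rw [linearIndependent_iff']
  intro t g hsum
  by_contra hne
  obtain ⟨ν₀, hν₀, hmax⟩ := Finset.exists_max_image (t.filter (g · ≠ 0)) (fun ν => ∑ i, ν.1 i)
    (by simpa [Finset.filter_nonempty_iff] using hne)
  rw [Finset.mem_filter] at hν₀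
  have hcoeff := congrArg (coeff (Finsupp.equivFunOnFinite.symm ν₀.1)) hsum
  rw [coeff_sum, coeff_zero, Finset.sum_eq_single ν₀] at hcoeff
  · rw [coeff_smul, coeff_aPoly ν₀.2 (by simpa using ν₀.2) (by simp [Finsupp.degree_eq_sum])]
      at hcoeff
    simp [hν₀.2] at hcoeff
  · intro ν hν hνν₀
    by_cases hg : g ν = 0
    · rw [hg, zero_smul, coeff_zero]
    rw [coeff_smul, coeff_aPoly ν.2 (by simpa using ν₀.2)
      (by simpa [Finsupp.degree_eq_sum] using hmax ν (Finset.mem_filter.mpr ⟨hν, hg⟩)),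
      if_neg (by simpa [Subtype.ext_iff, eq_comm] using hνν₀), smul_zero]
  · exact fun h => absurd hν₀.1 h

theorem mem_span_aPoly_of_mem_alternatingSubmodule {f : P n}
    (hf : f ∈ alternatingSubmodule n R) :
    f ∈ Submodule.span R (Set.range fun ν : {ν : Fin n → ℕ // StrictAnti ν} => aPoly n ν) := by
  classical
  set V := Submodule.span R (Set.range fun ν : {ν : Fin n → ℕ // StrictAnti ν} => aPoly n ν)
  suffices key : ∀ N, ∀ f ∈ alternatingSubmodule n R,
      (∀ d : Fin n →₀ ℕ, StrictAnti ⇑d → N ≤ d.degree → coeff d f = 0) → f ∈ V from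
    key (f.totalDegree + 1) f hf fun d _ hd => notMem_support_iff.mp fun hmem => by
      have : d.degree ≤ f.totalDegree := le_totalDegree hmem
      omega
  intro N
  induction N with
  | zero =>
    intro f hf h
    rw [eq_zero_of_mem_alternatingSubmodule hf fun d hd => h d hd (Nat.zero_le _)]
    exact zero_mem V
  | succ N ih =>
    intro f hf h
    set T := f.support.filter fun d : Fin n →₀ ℕ => StrictAnti ⇑d ∧ d.degree = N
    have hT {d : Fin n →₀ ℕ} (hd : d ∈ T) : StrictAnti ⇑d ∧ d.degree = N :=
      (Finset.mem_filter.mp hd).2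
    set top := ∑ d ∈ T, coeff d f • aPoly n d
    have htop : top ∈ V := Submodule.sum_mem _ fun d hd =>
      Submodule.smul_mem _ _ (Submodule.subset_span ⟨⟨d, (hT hd).1⟩, rfl⟩)
    have hrest : f - top ∈ V := by
      refine ih _ (sub_mem hf (Submodule.sum_mem _ fun d _ =>
        Submodule.smul_mem _ _ (aPoly_mem_alternatingSubmodule _))) fun κ hκ hN => ?_
      have hcoeff : coeff κ top = if κ ∈ T then coeff κ f else 0 := by
        rw [coeff_sum, ← Finset.sum_ite_eq T κ fun d => coeff d f]
        refine Finset.sum_congr rfl fun d hd => ?_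
        have hdeg : ∑ i, d i ≤ κ.degree := by rw [← Finsupp.degree_eq_sum, (hT hd).2]; exact hN
        rw [coeff_smul, coeff_aPoly (hT hd).1 hκ hdeg]
        simp [DFunLike.coe_fn_eq]
      rw [coeff_sub, hcoeff]
      split_ifs with hκT
      · exact sub_self _
      · rw [sub_zero]
        by_contra hne
        rcases Nat.lt_or_ge N κ.degree with hlt | hle
        · exact hne (h κ hκ hlt)
        · exact hκT (Finset.mem_filter.mpr ⟨mem_support_iff.mpr hne, hκ, le_antisymm hle hN⟩)
    simpa using add_mem hrest htop

end Alternants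

section Partitions

variable {n : ℕ}

theorem StrictAnti.antitone_add_val {ν : Fin n → ℕ} (hν : StrictAnti ν) :
    Antitone fun i => ν i + i := by
  cases n with
  | zero => exact fun i => i.elim0
  | succ m =>
    refine Fin.antitone_iff_succ_le.mpr fun i => ?_
    have := Fin.strictAnti_iff_succ_lt.mp hν i
    simp only [Fin.val_succ, Fin.val_castSucc]
    omega

theorem StrictAnti.rho_le {ν : Fin n → ℕ} (hν : StrictAnti ν) (i : Fin n) : rho n i ≤ ν i := by
  have hi := i.isLt
  have := hν.antitone_add_val (show i ≤ ⟨n - 1, by omega⟩ from Fin.le_def.mpr (by simp; omega))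
  simp only [rho] at this ⊢
  omega

theorem StrictAnti.antitone_sub_rho {ν : Fin n → ℕ} (hν : StrictAnti ν) :
    Antitone fun i => ν i - rho n i := fun i j hij => by
  have := hν.antitone_add_val hij
  have := hν.rho_le i
  have := hν.rho_le j
  simp only [rho] at *
  omega

theorem Antitone.strictAnti_add_rho {lam : Fin n → ℕ} (hlam : Antitone lam) :
    StrictAnti fun i => lam i + rho n i := fun i j hij => by
  have := hlam hij.le
  have : (i : ℕ) < j := hij
  have := j.isLt
  simp only [rho]
  omega

def addRho (n : ℕ) (lam : {lam : Fin n → ℕ // Antitone lam}) : {ν : Fin n → ℕ // StrictAnti ν} :=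
  ⟨fun i => lam.1 i + rho n i, lam.2.strictAnti_add_rho⟩

theorem addRho_bijective : Function.Bijective (addRho n) := by
  refine ⟨fun lam mu h => Subtype.ext (funext fun i => ?_), fun ν =>
    ⟨⟨_, ν.2.antitone_sub_rho⟩, Subtype.ext (funext fun i => Nat.sub_add_cancel (ν.2.rho_le i))⟩⟩
  simpa [addRho] using congrFun (congrArg Subtype.val h) i

end Partitions

theorem stmt_4_general (n : ℕ) :
    (∀ lam : Fin n → ℕ, Antitone lam →
      ∃! s : P n, s.IsSymmetric ∧
        s * aPoly n (rho n) = aPoly n (fun i => lam i + rho n i)) ∧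
    ∃ s : {lam : Fin n → ℕ // Antitone lam} → P n,
      (∀ lam, (s lam).IsSymmetric ∧
        s lam * aPoly n (rho n) = aPoly n (fun i => lam.1 i + rho n i)) ∧
      LinearIndependent R s ∧
      Submodule.span R (Set.range s) = SymmSub n := by
  choose s hs_symm hs_mul using fun lam : {lam : Fin n → ℕ // Antitone lam} =>
    exists_isSymmetric_mul_aPoly_rho (aPoly_mem_alternatingSubmodule fun i => lam.1 i + rho n i)
  have mul_rho_injective : Function.Injective (· * aPoly n (rho n)) :=
    mul_left_injective₀ aPoly_rho_ne_zero
  have hs_comp : LinearMap.mulRight R (aPoly n (rho n)) ∘ s =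
      (fun ν : {ν : Fin n → ℕ // StrictAnti ν} => aPoly n ν) ∘ addRho n :=
    _root_.funext fun lam => (hs_mul lam).trans rfl
  refine ⟨fun lam hlam => ⟨s ⟨lam, hlam⟩, ⟨hs_symm _, hs_mul ⟨lam, hlam⟩⟩,
    fun t ht => mul_rho_injective (ht.2.trans (hs_mul ⟨lam, hlam⟩).symm)⟩,
    s, fun lam => ⟨hs_symm lam, hs_mul lam⟩, ?_, ?_⟩
  · exact LinearIndependent.of_comp _ (hs_comp ▸ linearIndependent_aPoly.comp _ addRho_bijective.1)
  · refine le_antisymm (Submodule.span_le.mpr (Set.range_subset_iff.mpr fun lam =>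
      (mem_symmetricSubalgebra _).mpr (hs_symm lam))) fun f hf => ?_
    have hmem := mem_span_aPoly_of_mem_alternatingSubmodule
      (((mem_symmetricSubalgebra f).mp hf).mul_mem_alternatingSubmodule
        (aPoly_mem_alternatingSubmodule (rho n)))
    rw [← addRho_bijective.2.range_comp, ← hs_comp, Set.range_comp, Submodule.span_image] at hmem
    obtain ⟨g, hg, hgf⟩ := hmem
    exact mul_rho_injective hgf ▸ hg

/-- for every partition `λ` with at most `n` parts (encoded as an
antitone tuple `λ : Fin n → ℕ`) there is a unique symmetric polynomial `s_λ`
with `s_λ · a_ρ = a_{λ+ρ}`; moreover the family `(s_λ)` is an `R`-basis of the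
module of symmetric polynomials. -/
theorem stmt_4 (n : ℕ) (hn : 1 ≤ n) :
    (∀ lam : Fin n → ℕ, Antitone lam →
      ∃! s : P n, s.IsSymmetric ∧
        s * aPoly n (rho n) = aPoly n (fun i => lam i + rho n i)) ∧
    ∃ s : {lam : Fin n → ℕ // Antitone lam} → P n,
      (∀ lam, (s lam).IsSymmetric ∧
        s lam * aPoly n (rho n) = aPoly n (fun i => lam.1 i + rho n i)) ∧
      LinearIndependent R s ∧
      Submodule.span R (Set.range s) = SymmSub n :=
  stmt_4_general n

end
end

section
/- Fix an integer m ≥ n and let J_m ⊆ P be the ideal generated by the elements t_k for all k > m together with (x_i|t)^m = (x_i+t_1)⋯(x_i+t_m) for i = 1, …, n. Then the intersection of J_m with the R-module of skew-symmetric polynomials equals the R-span of the set consisting of all elements t_k · a_ν with k > m and ν strictly decreasing in ℕ^n, together with all elements a_ν with ν strictly decreasing and ν_1 ≥ m. -/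
/-!
Every skew-symmetric `f` is an `R`-combination of alternants `a_ν` with `ν` strictly decreasing:
the lex-leading exponent of `f` is strictly decreasing (otherwise a transposition of the variables
would produce a larger monomial of `f`, or make its coefficient cancel against itself), and `a_ν`
is lex-monic of degree `ν`, so one subtracts and recurses. The same triangularity makes the `a_ν`
linearly independent.

Split `f = g + h`, where `h` collects the `a_ν` with `ν₁ ≥ m`; these lie in `J_m`. Setting
`t_k = 0` for `k > m` fixes `a_ν` for `ν₁ < m` and turns `g` into a polynomial of degree `< m` in
each variable which, like every element of `J_m`, vanishes on the grid `{-t_1, …, -t_m}ⁿ`. By the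
combinatorial Nullstellensatz it is zero, so by independence every coefficient of `g` lies in the
ideal `(t_k : k > m)`.
-/

/- R = ℤ[t₁, t₂, …] with tₖ encoded as `MvPolynomial.X (k-1)`, i.e. 0-indexed;
   P = R[x₁, …, xₙ] = MvPolynomial (Fin n) R. -/

open MvPolynomial

noncomputable section

/-- A polynomial `f ∈ P` is skew-symmetric if `σ · f = sgn(σ) f` for every
permutation `σ` of the variables. -/
def IsSkew (n : ℕ) (f : P n) : Prop :=
  ∀ σ : Equiv.Perm (Fin n), rename σ f = (Equiv.Perm.sign σ : ℤ) • f

/-- The ideal `J_m ⊆ P` generated by the `t_k` for `k > m` (encoded 0-indexed: the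
constants `MvPolynomial.X k` for `k ≥ m`) and the `(x_i|t)^m` for `i = 1, …, n`. -/
def Jm (n m : ℕ) : Ideal (P n) :=
  Ideal.span ({p : P n | ∃ k : ℕ, m ≤ k ∧ p = C (MvPolynomial.X k : R)} ∪
    {p : P n | ∃ i : Fin n, p = dm n i m})

open MonomialOrder

theorem StrictAnti.toLex_comp_perm_lt {ι α : Type*} [LinearOrder ι] [Finite ι] [Zero α]
    [Preorder α] {ν : ι → α} (hν : StrictAnti ν) {τ : Equiv.Perm ι} (hτ : τ ≠ 1) :
    toLex (Finsupp.equivFunOnFinite.symm (ν ∘ τ)) < toLex (Finsupp.equivFunOnFinite.symm ν) := by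
  obtain ⟨j, hj, hmin⟩ := exists_minimal_of_wellFoundedLT (fun j => τ j ≠ j)
    (not_forall.1 fun h => hτ (Equiv.ext h))
  have hfix : ∀ k < j, τ k = k := fun k hk => by_contra fun h => (hmin h hk.le).not_gt hk
  have hgt : j < τ j := lt_of_le_of_ne (not_lt.1 fun h => hj (τ.injective (hfix _ h))) hj.symm
  exact Finsupp.Lex.lt_iff.2 ⟨j, fun k hk => by simp [hfix k hk], by simpa using hν hgt⟩

theorem Finsupp.toLex_lt_toLex_mapDomain_swap {ι α : Type*} [LinearOrder ι] [AddCommMonoid α]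
    [Preorder α] {d : ι →₀ α} {i j : ι} (hij : i < j) (hd : d i < d j) :
    toLex d < toLex (d.mapDomain (Equiv.swap i j)) := by
  refine Finsupp.Lex.lt_iff.2 ⟨i, fun k hk => ?_, ?_⟩
  · simp [mapDomain_equiv_apply, Equiv.swap_apply_of_ne_of_ne hk.ne (hk.trans hij).ne]
  · simpa [mapDomain_equiv_apply] using hd

theorem MonomialOrder.degree_sub_leadingCoeff_smul_lt {σ S : Type*} [CommRing S]
    (m : MonomialOrder σ) {f g : MvPolynomial σ S} (hg : m.Monic g)
    (hdeg : m.degree g = m.degree f) (h : f - m.leadingCoeff f • g ≠ 0) :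
    m.degree (f - m.leadingCoeff f • g) ≺[m] m.degree f := by
  refine lt_of_le_of_ne (m.degree_sub_le.trans (max_le le_rfl ?_)) fun he => ?_
  · exact m.degree_smul_le.trans (hdeg ▸ le_rfl)
  · have := m.coeff_degree_ne_zero_iff.2 h
    rw [m.toSyn.injective he, coeff_sub, coeff_smul, ← hdeg, hg.coeff_degree, hdeg] at this
    simp [leadingCoeff] at this

theorem MonomialOrder.linearIndepOn_of_monic {σ ι S : Type*} [CommRing S] (m : MonomialOrder σ)
    {v : ι → MvPolynomial σ S} {s : Set ι} (hv : ∀ i ∈ s, m.Monic (v i))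
    (hinj : Set.InjOn (m.degree ∘ v) s) : LinearIndepOn S v s := by
  classical
  refine linearIndepOn_iff'.2 fun t g hts hsum => ?_
  by_contra! h
  obtain ⟨i₀, hi₀, hmax⟩ := (t.filter (g · ≠ 0)).exists_max_image
    (fun i => m.toSyn (m.degree (v i))) (by obtain ⟨i, hi, hgi⟩ := h; exact ⟨i, by simp [hi, hgi]⟩)
  rw [Finset.mem_filter] at hi₀
  have hcoeff := congrArg (coeff (m.degree (v i₀))) hsum
  rw [coeff_sum, Finset.sum_eq_single_of_mem i₀ hi₀.1] at hcoeff
  · simp [(hv _ (hts hi₀.1)).coeff_degree, hi₀.2] at hcoeff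
  intro i hi hne
  by_cases hgi : g i = 0
  · simp [hgi]
  rw [coeff_smul, m.coeff_eq_zero_of_lt, smul_zero]
  exact lt_of_le_of_ne (hmax i (by simp [hi, hgi]))
    fun he => hne (hinj (hts hi) (hts hi₀.1) (m.toSyn.injective he))

theorem MonomialOrder.degree_C_lt_degree_X {σ S : Type*} [CommSemiring S] [Nontrivial S]
    (m : MonomialOrder σ) (s : σ) (c : S) :
    m.degree (C c : MvPolynomial σ S) ≺[m] m.degree (X s : MvPolynomial σ S) := by
  rw [m.degree_C, m.degree_X, map_zero, m.toSyn_lt_iff_ne_zero, Ne, m.toSyn_eq_zero_iff]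
  exact Finsupp.single_ne_zero.2 one_ne_zero

section DoubleMonomial

variable {n : ℕ}

theorem lex_monic_dm (i : Fin n) (k : ℕ) : lex.Monic (dm n i k) :=
  Monic.prod fun _ _ => lex.monic_X.add_of_lt (lex.degree_C_lt_degree_X i _)

theorem lex_degree_dm (i : Fin n) (k : ℕ) : lex.degree (dm n i k) = Finsupp.single i k := by
  rw [dm, lex.degree_prod fun _ _ =>
    (lex.monic_X.add_of_lt (lex.degree_C_lt_degree_X i _)).ne_zero]
  simp [lex.degree_add_of_lt (lex.degree_C_lt_degree_X i _), lex.degree_X]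

theorem lex_degree_prod_dm (σ : Equiv.Perm (Fin n)) (ν : Fin n → ℕ) :
    lex.degree (∏ i, dm n (σ i) (ν i)) = Finsupp.equivFunOnFinite.symm (ν ∘ σ.symm) := by
  rw [lex.degree_prod fun i _ => (lex_monic_dm _ _).ne_zero]
  ext j
  simp [lex_degree_dm, Finsupp.single_apply, ← Equiv.eq_symm_apply]

theorem degreeOf_dm_le (i j : Fin n) (k : ℕ) :
    degreeOf i (dm n j k) ≤ if j = i then k else 0 := by
  have hfactor (l : ℕ) : degreeOf i (X j + C (X l : R)) ≤ degreeOf i (X j : P n) :=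
    (degreeOf_add_le _ _ _).trans (max_le le_rfl ((degreeOf_C _ _).trans_le (Nat.zero_le _)))
  refine (degreeOf_prod_le _ _ _).trans ((Finset.sum_le_sum fun l _ => hfactor l).trans ?_)
  split_ifs with h
  · simp [h]
  · simp [degreeOf_X, Ne.symm h]

end DoubleMonomial

section Alternant

variable {n : ℕ}

theorem lex_degree_prod_dm_lt {ν : Fin n → ℕ} (hν : StrictAnti ν) {σ : Equiv.Perm (Fin n)}
    (hσ : σ ≠ 1) : lex.degree (∏ i, dm n (σ i) (ν i)) ≺[lex] Finsupp.equivFunOnFinite.symm ν := by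
  rw [lex_degree_prod_dm, lex_lt_iff]
  exact hν.toLex_comp_perm_lt (by simpa [← Equiv.Perm.inv_def] using hσ)

theorem lex_degree_prod_dm_id (ν : Fin n → ℕ) :
    lex.degree (∏ i, dm n i (ν i)) = Finsupp.equivFunOnFinite.symm ν := by
  simpa [← Equiv.Perm.inv_def] using lex_degree_prod_dm 1 ν

theorem coeff_aPoly_self {ν : Fin n → ℕ} (hν : StrictAnti ν) :
    coeff (Finsupp.equivFunOnFinite.symm ν) (aPoly n ν) = 1 := by
  rw [aPoly, coeff_sum, Finset.sum_eq_single 1]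
  · simp [← lex_degree_prod_dm_id, (Monic.prod fun i _ => lex_monic_dm i (ν i)).coeff_degree]
  · intro σ _ hσ
    rw [coeff_smul, lex.coeff_eq_zero_of_lt (lex_degree_prod_dm_lt hν hσ), smul_zero]
  · simp

theorem lex_degree_aPoly {ν : Fin n → ℕ} (hν : StrictAnti ν) :
    lex.degree (aPoly n ν) = Finsupp.equivFunOnFinite.symm ν := by
  refine lex.toSyn.injective (le_antisymm ?_ (lex.le_degree ?_))
  · refine lex.degree_sum_le.trans (Finset.sup_le fun σ _ => ?_)
    obtain rfl | hσ := eq_or_ne σ 1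
    · simp [lex_degree_prod_dm_id]
    · exact (lex.degree_le_degree_of_support_subset Finsupp.support_smul).trans
        (lex_degree_prod_dm_lt hν hσ).le
  · simp [coeff_aPoly_self hν]

theorem lex_monic_aPoly {ν : Fin n → ℕ} (hν : StrictAnti ν) : lex.Monic (aPoly n ν) := by
  rw [Monic, leadingCoeff, lex_degree_aPoly hν, coeff_aPoly_self hν]

theorem linearIndepOn_aPoly : LinearIndepOn R (aPoly n) {ν | StrictAnti ν} :=
  lex.linearIndepOn_of_monic (fun _ hν => lex_monic_aPoly hν) fun ν hν μ hμ h => by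
    simpa [lex_degree_aPoly hν, lex_degree_aPoly hμ] using h

theorem isSkew_aPoly (ν : Fin n → ℕ) : IsSkew n (aPoly n ν) := by
  intro σ
  have hrename : ∀ i k, rename σ (dm n i k) = dm n (σ i) k := by simp [dm, map_prod]
  simp only [aPoly, map_sum, map_zsmul, map_prod, hrename, Finset.smul_sum]
  refine Fintype.sum_equiv (Equiv.mulLeft σ) _ _ fun τ => ?_
  simp [Equiv.Perm.sign_mul, ← mul_assoc, ← Int.cast_mul, Int.units_coe_mul_self]

theorem degreeOf_aPoly_lt {ν : Fin n → ℕ} {d : ℕ} (hν : ∀ j, ν j < d) (i : Fin n) :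
    degreeOf i (aPoly n ν) < d := by
  refine (degreeOf_sum_le _ _ _).trans_lt ((Finset.sup_lt_iff (hν i).bot_lt).2 fun σ _ => ?_)
  refine (degreeOf_le_iff.2 fun β hβ =>
    monomial_le_degreeOf i (Finsupp.support_smul hβ)).trans_lt ?_
  refine ((degreeOf_prod_le _ _ _).trans (Finset.sum_le_sum fun j _ =>
    degreeOf_dm_le i (σ j) (ν j))).trans_lt ?_
  simpa [← Equiv.eq_symm_apply] using hν (σ.symm i)

end Alternant

section Skew

def skewSubmodule (n : ℕ) : Submodule R (P n) where
  carrier := {f | IsSkew n f}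
  add_mem' {f g} hf hg σ := by rw [map_add, hf σ, hg σ, smul_add]
  zero_mem' σ := by simp
  smul_mem' r f hf σ := by rw [map_smul, hf σ, smul_comm]

variable {n : ℕ}

theorem IsSkew.sign_smul_coeff_mapDomain {f : P n} (hf : IsSkew n f) (σ : Equiv.Perm (Fin n))
    (d : Fin n →₀ ℕ) : (Equiv.Perm.sign σ : ℤ) • coeff (d.mapDomain σ) f = coeff d f := by
  rw [← coeff_smul, ← hf σ, coeff_rename_mapDomain _ σ.injective]

theorem IsSkew.strictAnti_lex_degree {f : P n} (hf : IsSkew n f) (h0 : f ≠ 0) :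
    StrictAnti ⇑(lex.degree f) := by
  set d := lex.degree f
  have hd : coeff d f ≠ 0 := lex.coeff_degree_ne_zero_iff.2 h0
  intro i j hij
  have key := hf.sign_smul_coeff_mapDomain (Equiv.swap i j) d
  rcases lt_trichotomy (d j) (d i) with hlt | heq | hgt
  · exact hlt
  · have hfix : d.mapDomain (Equiv.swap i j) = d := by
      ext k
      simp only [Finsupp.mapDomain_equiv_apply, Equiv.symm_swap, Equiv.swap_apply_def]
      split_ifs <;> simp_all
    rw [hfix, Equiv.Perm.sign_swap hij.ne] at key
    exact absurd (CharZero.neg_eq_self_iff.1 (by simpa using key)) hd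
  · refine absurd (lex.le_degree ?_) (not_le.2 (Finsupp.toLex_lt_toLex_mapDomain_swap hij hgt))
    rw [mem_support_iff]
    intro h
    rw [h, smul_zero] at key
    exact hd key.symm

theorem IsSkew.mem_span_aPoly {f : P n} (hf : IsSkew n f) :
    f ∈ Submodule.span R (aPoly n '' {ν | StrictAnti ν}) := by
  induction hd : lex.toSyn (lex.degree f) using WellFoundedLT.induction generalizing f with
  | ind d ih =>
  obtain rfl | h0 := eq_or_ne f 0
  · exact Submodule.zero_mem _
  set ν := ⇑(lex.degree f)
  have hν : StrictAnti ν := hf.strictAnti_lex_degree h0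
  set c := lex.leadingCoeff f
  suffices f - c • aPoly n ν ∈ Submodule.span R (aPoly n '' {ν | StrictAnti ν}) by
    simpa using add_mem this (Submodule.smul_mem _ c (Submodule.subset_span ⟨ν, hν, rfl⟩))
  obtain hg0 | hg0 := eq_or_ne (f - c • aPoly n ν) 0
  · rw [hg0]
    exact Submodule.zero_mem _
  refine ih _ ?_ ((skewSubmodule n).sub_mem hf ((skewSubmodule n).smul_mem c (isSkew_aPoly ν))) rfl
  rw [← hd]
  exact lex.degree_sub_leadingCoeff_smul_lt (lex_monic_aPoly hν)
    (by rw [lex_degree_aPoly hν]; simp [ν]) hg0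

end Skew

section Specialization

/-- Sets `t_k = 0` for `k > m`, i.e. `X k = 0` for `k ≥ m` in the 0-indexed encoding. -/
def truncT (m : ℕ) : R →+* R := eval₂Hom C fun k => if k < m then X k else 0

theorem truncT_X (m k : ℕ) : truncT m (X k) = if k < m then X k else 0 := by simp [truncT]

theorem mem_span_X_of_truncT_eq_zero {m : ℕ} {r : R} (hr : truncT m r = 0) :
    r ∈ Ideal.span (X '' Set.Ici m) := by
  set I := Ideal.span (X '' Set.Ici m : Set R)
  have hquot : (Ideal.Quotient.mk I).comp (truncT m) = Ideal.Quotient.mk I := by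
    refine ringHom_ext (fun a => by simp [truncT]) fun k => ?_
    simp only [RingHom.comp_apply, truncT_X]
    split_ifs with hk
    · rfl
    · exact (Ideal.Quotient.eq_zero_iff_mem.2
        (Ideal.subset_span (Set.mem_image_of_mem X (Set.mem_Ici.2 (not_lt.1 hk))))).symm
  rw [← Ideal.Quotient.eq_zero_iff_mem, ← hquot, RingHom.comp_apply, hr, map_zero]

variable {n m : ℕ}

theorem map_truncT_dm {k : ℕ} (hk : k ≤ m) (i : Fin n) :
    map (truncT m) (dm n i k) = dm n i k := by
  simp only [dm, map_prod, map_add, map_X, map_C, truncT_X]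
  exact Finset.prod_congr rfl fun j hj => by rw [if_pos (by simp at hj; omega)]

theorem map_truncT_aPoly {ν : Fin n → ℕ} (hν : ∀ i, ν i ≤ m) :
    map (truncT m) (aPoly n ν) = aPoly n ν := by
  simp only [aPoly, map_sum, map_zsmul, map_prod, map_truncT_dm (hν _)]

end Specialization

section IdealJm

variable {n m : ℕ}

theorem dm_mem_Jm {k : ℕ} (hk : m ≤ k) (i : Fin n) : dm n i k ∈ Jm n m := by
  obtain ⟨r, rfl⟩ := Nat.exists_eq_add_of_le hk
  rw [dm, Finset.prod_range_add]
  exact Ideal.mul_mem_right _ _ (Ideal.subset_span (Or.inr ⟨i, rfl⟩))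

theorem aPoly_mem_Jm {ν : Fin n → ℕ} {j : Fin n} (hj : m ≤ ν j) : aPoly n ν ∈ Jm n m := by
  refine Ideal.sum_mem _ fun σ _ => zsmul_mem ?_ _
  rw [← Finset.mul_prod_erase _ _ (Finset.mem_univ j)]
  exact Ideal.mul_mem_right _ _ (dm_mem_Jm hj _)

theorem X_smul_mem_Jm {k : ℕ} (hk : m ≤ k) (f : P n) : (X k : R) • f ∈ Jm n m := by
  rw [smul_eq_C_mul]
  exact Ideal.mul_mem_right _ _ (Ideal.subset_span (Or.inl ⟨k, hk, rfl⟩))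

theorem eval_map_truncT_eq_zero_of_mem_Jm {x : Fin n → R} (hx : ∀ i, ∃ l < m, -X l = x i)
    {f : P n} (hf : f ∈ Jm n m) : eval x (map (truncT m) f) = 0 := by
  suffices Jm n m ≤ RingHom.ker ((eval x).comp (map (truncT m))) from this hf
  refine Ideal.span_le.2 ?_
  rintro p (⟨k, hk, rfl⟩ | ⟨i, rfl⟩)
  · simp [truncT_X, not_lt.2 hk]
  · obtain ⟨l, hl, hxl⟩ := hx i
    rw [SetLike.mem_coe, RingHom.mem_ker, RingHom.comp_apply, map_truncT_dm le_rfl, dm, map_prod]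
    exact Finset.prod_eq_zero (Finset.mem_range.2 hl) (by simp [← hxl])

theorem smul_aPoly_mem_span {c : R} (hc : c ∈ Ideal.span (X '' Set.Ici m)) {ν : Fin n → ℕ}
    (hν : StrictAnti ν) :
    c • aPoly n ν ∈ Submodule.span R {p : P n | ∃ k : ℕ, m ≤ k ∧ ∃ ν : Fin n → ℕ,
      StrictAnti ν ∧ p = (X k : R) • aPoly n ν} := by
  induction hc using Submodule.span_induction with
  | mem r hr =>
    obtain ⟨k, hk, rfl⟩ := hr
    exact Submodule.subset_span ⟨k, hk, ν, hν, rfl⟩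
  | zero => simp
  | add x y _ _ hx hy => rw [add_smul]; exact add_mem hx hy
  | smul a x _ hx => rw [smul_eq_mul, mul_smul]; exact Submodule.smul_mem _ a hx

theorem mem_span_X_smul_aPoly_of_mem_Jm (hm : 0 < m) {g : P n} (hgJ : g ∈ Jm n m)
    (hg : g ∈ Submodule.span R (aPoly n '' {ν | StrictAnti ν ∧ ∀ i, ν i < m})) :
    g ∈ Submodule.span R {p : P n | ∃ k : ℕ, m ≤ k ∧ ∃ ν : Fin n → ℕ, StrictAnti ν ∧
      p = (X k : R) • aPoly n ν} := by
  classical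
  obtain ⟨l, hl, rfl⟩ := (Finsupp.mem_span_image_iff_linearCombination R).1 hg
  rw [Finsupp.linearCombination_apply, Finsupp.sum] at hgJ ⊢
  have hs : ∀ ν ∈ l.support, StrictAnti ν ∧ ∀ i, ν i < m := fun ν hν => hl hν
  have hmap : map (truncT m) (∑ ν ∈ l.support, l ν • aPoly n ν) =
      ∑ ν ∈ l.support, truncT m (l ν) • aPoly n ν := by
    refine (map_sum _ _ _).trans (Finset.sum_congr rfl fun ν hν => ?_)
    rw [smul_eq_C_mul, map_mul, map_C, map_truncT_aPoly fun i => ((hs ν hν).2 i).le, smul_eq_C_mul]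
  have hzero : map (truncT m) (∑ ν ∈ l.support, l ν • aPoly n ν) = 0 := by
    refine eq_zero_of_eval_zero_at_prod_finset _ (fun _ => (Finset.range m).image fun k => -X k)
      (fun i => ?_) fun x hx => eval_map_truncT_eq_zero_of_mem_Jm (fun i => ?_) hgJ
    · rw [Finset.card_image_of_injective _ fun _ _ h => X_injective (neg_injective h),
        Finset.card_range, hmap]
      refine (degreeOf_sum_le _ _ _).trans_lt ((Finset.sup_lt_iff hm).2 fun ν hν => ?_)
      rw [smul_eq_C_mul]
      exact (degreeOf_C_mul_le _ _ _).trans_lt (degreeOf_aPoly_lt (hs ν hν).2 i)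
    · simpa using hx i
  have hcoeff := linearIndepOn_iff'.1 linearIndepOn_aPoly l.support (fun ν => truncT m (l ν))
    (fun ν hν => (hs ν hν).1) (hmap ▸ hzero)
  exact Submodule.sum_mem _ fun ν hν =>
    smul_aPoly_mem_span (mem_span_X_of_truncT_eq_zero (hcoeff ν hν)) (hs ν hν).1

end IdealJm

/-- the intersection of `J_m` with the module of skew-symmetric
polynomials is the `R`-span of the elements `t_k • a_ν` (`k > m`, i.e. 0-indexed
index `≥ m`, and `ν` strictly decreasing) together with the `a_ν` for `ν`
strictly decreasing with `ν₁ ≥ m`. -/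
theorem stmt_8 (n m : ℕ) (hn : 1 ≤ n) (hm : n ≤ m) :
    {f : P n | f ∈ Jm n m ∧ IsSkew n f} =
      (Submodule.span R
        ({p : P n | ∃ k : ℕ, m ≤ k ∧ ∃ ν : Fin n → ℕ, StrictAnti ν ∧
            p = (MvPolynomial.X k : R) • aPoly n ν} ∪
         {p : P n | ∃ ν : Fin n → ℕ, StrictAnti ν ∧ m ≤ ν ⟨0, hn⟩ ∧
            p = aPoly n ν}) : Set (P n)) := by
  set A := {p : P n | ∃ k : ℕ, m ≤ k ∧ ∃ ν : Fin n → ℕ, StrictAnti ν ∧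
    p = (MvPolynomial.X k : R) • aPoly n ν}
  set B := {p : P n | ∃ ν : Fin n → ℕ, StrictAnti ν ∧ m ≤ ν ⟨0, hn⟩ ∧ p = aPoly n ν}
  have hspan_le : Submodule.span R (A ∪ B) ≤ (Jm n m).restrictScalars R ⊓ skewSubmodule n := by
    refine Submodule.span_le.2 ?_
    rintro p (⟨k, hk, ν, -, rfl⟩ | ⟨ν, -, hν, rfl⟩)
    · exact ⟨X_smul_mem_Jm hk _, (skewSubmodule n).smul_mem _ (isSkew_aPoly ν)⟩
    · exact ⟨aPoly_mem_Jm hν, isSkew_aPoly ν⟩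
  refine Set.Subset.antisymm (fun f ⟨hfJ, hf⟩ => ?_) fun f hf => hspan_le hf
  have hsplit : {ν : Fin n → ℕ | StrictAnti ν} ⊆
      {ν | StrictAnti ν ∧ ∀ i, ν i < m} ∪ {ν | StrictAnti ν ∧ m ≤ ν ⟨0, hn⟩} := fun ν hν => by
    by_cases h : m ≤ ν ⟨0, hn⟩
    · exact Or.inr ⟨hν, h⟩
    · exact Or.inl ⟨hν, fun i => (hν.antitone (Nat.zero_le _)).trans_lt (not_le.1 h)⟩
  obtain ⟨g, hg, h, hh, rfl⟩ := Submodule.mem_sup.1 <| by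
    simpa only [Set.image_union, Submodule.span_union] using
      Submodule.span_mono (Set.image_mono hsplit) hf.mem_span_aPoly
  have hhB : h ∈ Submodule.span R B := Submodule.span_mono
    (by rintro _ ⟨ν, hν, rfl⟩; exact ⟨ν, hν.1, hν.2, rfl⟩) hh
  have hhJ : h ∈ Jm n m := (hspan_le (Submodule.span_mono Set.subset_union_right hhB)).1
  have hgA := mem_span_X_smul_aPoly_of_mem_Jm (hn.trans hm) (by simpa using sub_mem hfJ hhJ) hg
  exact add_mem (Submodule.span_mono Set.subset_union_left hgA)
    (Submodule.span_mono Set.subset_union_right hhB)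

end
end
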